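/- arXiv:2511.00809 — 2 statements merged into one kernel-verified Lean document; each statement's English description precedes it below -/
import Mathlib

section
/- Let F be a finite field, X a finite-dimensional F-vector space, and f, g : X → F^Ω F-linear maps that are locally ω-equivalent (wt(f(θ)) = wt(g(θ)) for all θ ∈ X). Suppose (χ(f[X]), χ(g[X]), ω) satisfies the unique decomposition property: for all I ⊆ χ(f[X]) and J ⊆ χ(g[X]) with Σ_{i∈I} ω(i) = Σ_{j∈J} ω(j), the multisets {ω(i) : i ∈ I} and {ω(j) : j ∈ J} coincide. Then there exists an ω-weight isometry φ of F^Ω (an F-linear automorphism with wt(φ(α)) = wt(α) for all α) such that g = φ ∘ f. -/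
open scoped Classical
open Finset

/-- ω-weight of a vector β ∈ F^Ω. -/
noncomputable def wwt {F Ω : Type*} [Field F] [Fintype Ω] (ω : Ω → ℝ) (β : Ω → F) : ℝ :=
  ∑ i ∈ univ.filter (fun i => β i ≠ 0), ω i

/-- ω-weight of a set A ⊆ F^Ω. -/
noncomputable def WWt {F Ω : Type*} [Field F] [Fintype Ω] (ω : Ω → ℝ) (A : Set (Ω → F)) : ℝ :=
  ∑ i ∈ univ.filter (fun i => ∃ β ∈ A, β i ≠ 0), ω i

/-!
For linear forms `μᵢ` on a finite `F`-space `Y`, each nonzero `μᵢ` is nonzero on exactly a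
fraction `1 - 1/q` of `Y`, so `∑_{y ∈ Y} wt(μ(y)) = |Y| (1 - 1/q) ∑_{μᵢ ≠ 0} ω(i)`.
Summing local equivalence over a subspace `W` therefore shows that the coordinates `i` with
`W ≤ ker fᵢ` and those with `W ≤ ker gᵢ` have the same total weight. For `W = ⊤` this compares
the supports `χ(f[X])` and `χ(g[X])` (the coordinates with `ker fᵢ ≠ ⊤`), and for a hyperplane `W`
the coordinates with `ker fᵢ = W`; the unique decomposition property turns each of these equal
weights into equal multisets of weights. Since every `ker fᵢ` is `⊤` or a hyperplane, this gives a
weight-preserving permutation `π` with `ker f_{π j} = ker g_j`; linear forms with the same kernel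
differ by a unit, and the resulting monomial map is the required isometry.
-/

section FiniteField

variable {F : Type*} [Field F] [Fintype F]

theorem card_filter_apply_ne_zero {X : Type*} [AddCommGroup X] [Module F X] [Fintype X]
    {μ : X →ₗ[F] F} (hμ : μ ≠ 0) :
    (#{x | μ x ≠ 0} : ℝ) = Fintype.card X * (1 - (Fintype.card F : ℝ)⁻¹) := by
  have hsurj := LinearMap.surjective_of_ne_zero hμ
  have hfiber (a : F) : #{x | μ x = a} = #{x | μ x = 0} :=
    AddMonoidHom.card_fiber_eq_of_mem_range μ.toAddMonoidHom (hsurj a) (hsurj 0)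
  have hcard : Fintype.card X = Fintype.card F * #{x | μ x = 0} := by
    rw [← card_univ, card_eq_sum_card_fiberwise (f := μ) (t := univ) (fun _ _ => mem_univ _)]
    simp [hfiber]
  have hsplit : (#{x | μ x = 0} + #{x | μ x ≠ 0} : ℝ) = Fintype.card X := by
    exact_mod_cast card_filter_add_card_filter_not (s := univ) (fun x => μ x = 0)
  have hq : (Fintype.card F : ℝ) ≠ 0 := by positivity
  rw [hcard] at hsplit ⊢
  push_cast at hsplit ⊢
  field_simp
  linear_combination hsplit

theorem sum_wwt_eq_mul_sum_filter_ne_zero {Ω : Type*} [Fintype Ω] (ω : Ω → ℝ)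
    {Y : Type*} [AddCommGroup Y] [Module F Y] [Fintype Y] (μ : Ω → Y →ₗ[F] F) :
    ∑ y, wwt ω (fun i => μ i y)
      = Fintype.card Y * (1 - (Fintype.card F : ℝ)⁻¹) * ∑ i with μ i ≠ 0, ω i := by
  simp only [wwt, sum_filter, mul_sum]
  rw [sum_comm]
  refine sum_congr rfl fun i _ => ?_
  rw [← sum_filter, sum_const, nsmul_eq_mul]
  by_cases hi : μ i = 0
  · simp [hi]
  · rw [card_filter_apply_ne_zero hi, if_pos hi, mul_comm]

end FiniteField

theorem exists_equiv_apply_eq_of_card_fiber_eq {α γ : Type*} [Fintype α] (c₁ c₂ : α → γ)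
    (h : ∀ v, #{a | c₁ a = v} = #{a | c₂ a = v}) : ∃ π : α ≃ α, ∀ a, c₁ (π a) = c₂ a :=
  ⟨Equiv.ofFiberEquiv fun v => Fintype.equivOfCardEq <| by
      rw [Fintype.card_subtype, Fintype.card_subtype, h],
    Equiv.ofFiberEquiv_map _⟩

theorem Module.Dual.exists_unit_smul_eq_of_ker_eq {K V : Type*} [Field K] [AddCommGroup V]
    [Module K V] [FiniteDimensional K V] {μ ν : Module.Dual K V}
    (h : LinearMap.ker μ = LinearMap.ker ν) : ∃ c : Kˣ, c • μ = ν := by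
  by_cases hμ : μ = 0
  · have hν : ν = 0 := by rw [← LinearMap.ker_eq_top, ← h, hμ, LinearMap.ker_zero]
    exact ⟨1, by rw [hμ, hν, smul_zero]⟩
  obtain ⟨x, hx⟩ : ∃ x, μ x ≠ 0 := by
    by_contra! h0
    exact hμ (LinearMap.ext h0)
  have hνx : ν x ≠ 0 := fun h0 => hx <| LinearMap.mem_ker.1 <| h ▸ LinearMap.mem_ker.2 h0
  refine ⟨Units.mk0 (ν x / μ x) (div_ne_zero hνx hx),
    Module.Dual.eq_of_ker_eq_of_apply_eq x ?_ ?_ ?_⟩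
  · rw [Units.smul_def, LinearMap.ker_smul _ _ (Units.ne_zero _), h]
  · simp [Units.smul_def, hx]
  · simp [Units.smul_def, hx, hνx]

def HasUniqueDecomposition {Ω : Type*} (ω : Ω → ℝ) (H K : Set Ω) : Prop :=
  ∀ I J : Finset Ω, ↑I ⊆ H → ↑J ⊆ K → ∑ i ∈ I, ω i = ∑ j ∈ J, ω j →
    ∀ b, #{i ∈ I | ω i = b} = #{j ∈ J | ω j = b}

section Coordinates

variable {F Ω X : Type*} [Field F] [AddCommGroup X] [Module F X]

def coordKer (f : X →ₗ[F] (Ω → F)) (i : Ω) : Submodule F X :=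
  LinearMap.ker (LinearMap.proj i ∘ₗ f)

theorem coordKer_eq_top_iff {f : X →ₗ[F] (Ω → F)} {i : Ω} :
    coordKer f i = ⊤ ↔ ∀ x, f x i = 0 := by
  simp [coordKer, Submodule.eq_top_iff']

theorem coordKer_eq_top_or_isCoatom (f : X →ₗ[F] (Ω → F)) (i : Ω) :
    coordKer f i = ⊤ ∨ IsCoatom (coordKer f i) := by
  by_cases h : LinearMap.proj i ∘ₗ f = 0
  · exact Or.inl (LinearMap.ker_eq_top.2 h)
  · exact Or.inr (LinearMap.isCoatom_ker_of_surjective (LinearMap.surjective_of_ne_zero h))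

theorem comp_subtype_eq_zero_iff_le_coordKer (f : X →ₗ[F] (Ω → F)) (i : Ω)
    (W : Submodule F X) :
    LinearMap.proj i ∘ₗ f ∘ₗ W.subtype = 0 ↔ W ≤ coordKer f i := by
  simp [LinearMap.ext_iff, SetLike.le_def, coordKer]

variable [Fintype F] [Fintype X] [Fintype Ω] {ω : Ω → ℝ} {f g : X →ₗ[F] (Ω → F)}

theorem sum_filter_le_coordKer_eq (hloc : ∀ x, wwt ω (f x) = wwt ω (g x)) (W : Submodule F X) :
    ∑ i with W ≤ coordKer f i, ω i = ∑ j with W ≤ coordKer g j, ω j := by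
  have hsum (h : X →ₗ[F] (Ω → F)) : ∑ y : W, wwt ω (h y) = Fintype.card W *
      (1 - (Fintype.card F : ℝ)⁻¹) * (∑ i, ω i - ∑ i with W ≤ coordKer h i, ω i) := by
    have := sum_wwt_eq_mul_sum_filter_ne_zero ω fun i => LinearMap.proj i ∘ₗ h ∘ₗ W.subtype
    rw [filter_congr fun i _ => (comp_subtype_eq_zero_iff_le_coordKer h i W).not] at this
    rw [← sum_filter_add_sum_filter_not univ (fun i => W ≤ coordKer h i), add_sub_cancel_left]
    exact this
  have hq : (1 : ℝ) < Fintype.card F := by exact_mod_cast Fintype.one_lt_card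
  have hpos : (0 : ℝ) < Fintype.card W * (1 - (Fintype.card F : ℝ)⁻¹) :=
    mul_pos (by exact_mod_cast Fintype.card_pos) (sub_pos.2 (inv_lt_one_of_one_lt₀ hq))
  have hlocW : ∑ y : W, wwt ω (f y) = ∑ y : W, wwt ω (g y) := sum_congr rfl fun y _ => hloc y
  have heq := mul_left_cancel₀ hpos.ne' <| (hsum f).symm.trans <| hlocW.trans (hsum g)
  linarith

theorem sum_filter_coordKer_eq_of_isCoatom (hloc : ∀ x, wwt ω (f x) = wwt ω (g x))
    {W : Submodule F X} (hW : IsCoatom W) :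
    ∑ i with coordKer f i = W, ω i = ∑ j with coordKer g j = W, ω j := by
  have hsplit (h : X →ₗ[F] (Ω → F)) : ∑ i with W ≤ coordKer h i, ω i =
      ∑ i with ⊤ ≤ coordKer h i, ω i + ∑ i with coordKer h i = W, ω i := by
    simp only [hW.le_iff, top_le_iff]
    rw [filter_or, sum_union <| disjoint_filter.2
      fun i _ (htop : coordKer h i = ⊤) (hi : coordKer h i = W) => hW.1 (hi ▸ htop)]
  linarith [hsplit f, hsplit g, sum_filter_le_coordKer_eq hloc W,
    sum_filter_le_coordKer_eq hloc ⊤]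

theorem sum_filter_coordKer_ne_top_eq (hloc : ∀ x, wwt ω (f x) = wwt ω (g x)) :
    ∑ i with coordKer f i ≠ ⊤, ω i = ∑ j with coordKer g j ≠ ⊤, ω j := by
  have hT := sum_filter_le_coordKer_eq hloc ⊤
  simp only [top_le_iff] at hT
  have hf := sum_filter_add_sum_filter_not univ (fun i => coordKer f i = ⊤) ω
  have hg := sum_filter_add_sum_filter_not univ (fun i => coordKer g i = ⊤) ω
  linarith

theorem card_filter_coordKer_eq (hloc : ∀ x, wwt ω (f x) = wwt ω (g x))
    (hUDP : HasUniqueDecomposition ω {i | coordKer f i ≠ ⊤} {j | coordKer g j ≠ ⊤})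
    (W : Submodule F X) (b : ℝ) :
    #{i | coordKer f i = W ∧ ω i = b} = #{j | coordKer g j = W ∧ ω j = b} := by
  by_cases hT : W = ⊤
  · subst hT
    -- the unique decomposition property only sees the supports, so count their complements
    have hsupp := hUDP _ _ (by simp) (by simp) (sum_filter_coordKer_ne_top_eq hloc) b
    have hsplit (h : X →ₗ[F] (Ω → F)) : #{i | coordKer h i = ⊤ ∧ ω i = b} +
        #{i ∈ {i | coordKer h i ≠ ⊤} | ω i = b} = #{i | ω i = b} := by
      rw [filter_filter, ← card_union_of_disjoint (disjoint_filter.2 fun _ _ h1 h2 => h2.1 h1.1)]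
      congr 1
      ext i
      simp only [mem_union, mem_filter, mem_univ, true_and]
      tauto
    linarith [hsplit f, hsplit g]
  by_cases hW : IsCoatom W
  · have h := hUDP _ _ (by intro i; simp_all) (by intro i; simp_all)
      (sum_filter_coordKer_eq_of_isCoatom hloc hW) b
    simpa only [filter_filter] using h
  · have hempty (h : X →ₗ[F] (Ω → F)) : #{i | coordKer h i = W ∧ ω i = b} = 0 := by
      refine card_eq_zero.2 (filter_eq_empty_iff.2 fun i _ ⟨hi, _⟩ => ?_)
      rcases coordKer_eq_top_or_isCoatom h i with h' | h' <;> rw [hi] at h'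
      exacts [hT h', hW h']
    rw [hempty f, hempty g]

theorem exists_equiv_coordKer_eq (hloc : ∀ x, wwt ω (f x) = wwt ω (g x))
    (hUDP : HasUniqueDecomposition ω {i | coordKer f i ≠ ⊤} {j | coordKer g j ≠ ⊤}) :
    ∃ π : Ω ≃ Ω, ∀ j, coordKer f (π j) = coordKer g j ∧ ω (π j) = ω j := by
  obtain ⟨π, hπ⟩ := exists_equiv_apply_eq_of_card_fiber_eq (fun i => (coordKer f i, ω i))
    (fun j => (coordKer g j, ω j)) fun ⟨W, b⟩ => by
      simpa only [Prod.mk.injEq] using card_filter_coordKer_eq hloc hUDP W b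
  exact ⟨π, fun j => Prod.mk.inj (hπ j)⟩

end Coordinates

section Monomial

variable {F Ω : Type*} [Field F]

def monomialEquiv (π : Ω ≃ Ω) (c : Ω → Fˣ) : (Ω → F) ≃ₗ[F] (Ω → F) :=
  (LinearEquiv.funCongrLeft F F π).trans
    (LinearEquiv.piCongrRight fun j => LinearEquiv.smulOfUnit (c j))

@[simp]
theorem monomialEquiv_apply (π : Ω ≃ Ω) (c : Ω → Fˣ) (α : Ω → F) (j : Ω) :
    monomialEquiv π c α j = c j * α (π j) :=
  rfl

theorem wwt_monomialEquiv [Fintype Ω] {ω : Ω → ℝ} {π : Ω ≃ Ω} (hπ : ∀ j, ω (π j) = ω j)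
    (c : Ω → Fˣ) (α : Ω → F) : wwt ω (monomialEquiv π c α) = wwt ω α := by
  simp only [wwt, sum_filter, monomialEquiv_apply, ne_eq, mul_eq_zero, Units.ne_zero, false_or]
  rw [← Equiv.sum_comp π fun i => if ¬α i = 0 then ω i else 0]
  simp only [hπ]

end Monomial

theorem stmt6_general {F Ω : Type*} [Field F] [Fintype F] [Fintype Ω]
    {X : Type*} [AddCommGroup X] [Module F X] [FiniteDimensional F X]
    (ω : Ω → ℝ)
    (f g : X →ₗ[F] (Ω → F))
    (hloc : ∀ θ : X, wwt ω (f θ) = wwt ω (g θ))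
    (hUDP : ∀ I J : Finset Ω,
      (∀ i ∈ I, ∃ θ : X, f θ i ≠ 0) → (∀ j ∈ J, ∃ θ : X, g θ j ≠ 0) →
      (∑ i ∈ I, ω i) = (∑ j ∈ J, ω j) →
      ∀ b : ℝ, (I.filter (fun i => ω i = b)).card = (J.filter (fun j => ω j = b)).card) :
    ∃ φ : (Ω → F) ≃ₗ[F] (Ω → F),
      (∀ α : Ω → F, wwt ω (φ α) = wwt ω α) ∧ ∀ x : X, φ (f x) = g x := by
  have : Finite X := Module.finite_of_finite F
  have : Fintype X := Fintype.ofFinite X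
  obtain ⟨π, hπ⟩ := exists_equiv_coordKer_eq hloc fun I J hI hJ =>
    hUDP I J (fun i hi => by simpa [coordKer_eq_top_iff] using hI hi)
      (fun j hj => by simpa [coordKer_eq_top_iff] using hJ hj)
  choose c hc using fun j => Module.Dual.exists_unit_smul_eq_of_ker_eq (hπ j).1
  refine ⟨monomialEquiv π c, wwt_monomialEquiv (fun j => (hπ j).2) c, fun x => funext fun j => ?_⟩
  simpa [Units.smul_def] using LinearMap.congr_fun (hc j) x

theorem stmt6 {F Ω : Type*} [Field F] [Fintype F] [Fintype Ω] [Nonempty Ω]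
    {X : Type*} [AddCommGroup X] [Module F X] [FiniteDimensional F X]
    (ω : Ω → ℝ) (hω : ∀ i, 0 < ω i)
    (f g : X →ₗ[F] (Ω → F))
    (hloc : ∀ θ : X, wwt ω (f θ) = wwt ω (g θ))
    (hUDP : ∀ I J : Finset Ω,
      (∀ i ∈ I, ∃ θ : X, f θ i ≠ 0) → (∀ j ∈ J, ∃ θ : X, g θ j ≠ 0) →
      (∑ i ∈ I, ω i) = (∑ j ∈ J, ω j) →
      ∀ b : ℝ, (I.filter (fun i => ω i = b)).card = (J.filter (fun j => ω j = b)).card) :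
    ∃ φ : (Ω → F) ≃ₗ[F] (Ω → F),
      (∀ α : Ω → F, wwt ω (φ α) = wwt ω α) ∧ ∀ x : X, φ (f x) = g x :=
  stmt6_general ω f g hloc hUDP
end

section
/- Let F be a finite field with q elements, C ≤ F^Ω a code of dimension k with generator matrix G and column map τ. Suppose there exists σ ∈ ℝ with Σ_{i ∈ χ(C), τ(i) ∈ I} ω(i) = σ for every 1-dimensional subspace I ≤ F^{[k]}. Then for every subspace D ≤ C with dim D = s, the ω-weight of D satisfies Wt(D) = (q^k − q^{k−s})σ/(q − 1). -/
/-!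
Pulling `D` back along the injective encoder `γ ↦ γ G` gives a subspace `E ≤ F^k` of dimension `s`,
and coordinate `i` lies in the support of `D` exactly when the column `τ i` is not in `E^⊥`, a
subspace of dimension `k - s`. Double count the pairs `(v, i)` with `v ∉ E^⊥` and `0 ≠ τ i ∈ ⟨v⟩`:
each of the `q^k - q^(k-s)` vectors `v` contributes `σ` by hypothesis, while a column `τ i ∉ E^⊥`
lies in `⟨v⟩` for exactly the `q - 1` nonzero vectors `v` of its own line, all outside `E^⊥`, and a
column in `E^⊥` for none.
-/

open scoped Classical
open Finset

section Lines

variable {F V : Type*} [Field F] [Fintype F] [AddCommGroup V] [Module F V] [Fintype V]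

theorem card_filter_mem_span_singleton {x : V} (hx : x ≠ 0) :
    #{v | x ∈ Submodule.span F {v}} = Fintype.card F - 1 := by
  have hinj : Function.Injective fun c : Fˣ => (c : F) • x :=
    (smul_left_injective F hx).comp Units.val_injective
  have himage : ({v | x ∈ Submodule.span F {v}} : Finset V) = univ.map ⟨_, hinj⟩ := by
    ext v
    simp only [mem_filter, mem_univ, true_and, mem_map, Function.Embedding.coeFn_mk]
    constructor
    · intro hv
      obtain ⟨a, rfl⟩ := Submodule.mem_span_singleton.mp hv
      have ha : a ≠ 0 := by rintro rfl; simp at hx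
      exact ⟨(Units.mk0 a ha)⁻¹, by simp [smul_smul, ha]⟩
    · rintro ⟨c, rfl⟩
      exact Submodule.mem_span_singleton.mpr ⟨(c⁻¹ : Fˣ), by simp [smul_smul]⟩
  rw [himage, card_map, card_univ, Fintype.card_units]

theorem card_filter_notMem_and_mem_span_singleton (W : Submodule F V) (x : V) :
    #{v | v ∉ W ∧ x ≠ 0 ∧ x ∈ Submodule.span F {v}} =
      if x ∈ W then 0 else Fintype.card F - 1 := by
  split_ifs with hxW
  · refine card_eq_zero.mpr (filter_eq_empty_iff.mpr fun v _ ⟨hvW, hx, hv⟩ => hvW ?_)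
    obtain ⟨a, rfl⟩ := Submodule.mem_span_singleton.mp hv
    have ha : a ≠ 0 := by rintro rfl; simp at hx
    simpa [smul_smul, ha] using W.smul_mem a⁻¹ hxW
  · have hx : x ≠ 0 := fun h => hxW (h ▸ W.zero_mem)
    rw [← card_filter_mem_span_singleton (F := F) hx]
    congr 1
    ext v
    simp only [mem_filter, mem_univ, true_and]
    refine ⟨fun h => h.2.2, fun hv => ⟨fun hvW => hxW ?_, hx, hv⟩⟩
    exact (Submodule.span_singleton_le_iff_mem v W).mpr hvW hv

theorem card_sub_one_mul_sum_notMem_eq {Ω : Type*} [Fintype Ω] (W : Submodule F V) (τ : Ω → V)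
    (ω : Ω → ℝ) (σ : ℝ)
    (h : ∀ v ≠ 0, ∑ i ∈ univ.filter (fun i => τ i ≠ 0 ∧ τ i ∈ Submodule.span F {v}), ω i = σ) :
    ((Fintype.card F : ℝ) - 1) * ∑ i ∈ univ.filter (fun i => τ i ∉ W), ω i =
      ((Fintype.card V : ℝ) - Fintype.card W) * σ := by
  have hcard : #{v | v ∉ W} = Fintype.card V - Fintype.card W := by
    rw [filter_not, card_sdiff_of_subset (filter_subset _ _), card_univ, Fintype.card_subtype]
  have hF : 1 ≤ Fintype.card F := Fintype.card_pos
  calc ((Fintype.card F : ℝ) - 1) * ∑ i ∈ univ.filter (fun i => τ i ∉ W), ω i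
      = ∑ i, ∑ v ∈ univ.filter (fun v => v ∉ W ∧ τ i ≠ 0 ∧ τ i ∈ Submodule.span F {v}), ω i := by
        simp only [sum_const, card_filter_notMem_and_mem_span_singleton, mul_sum, sum_filter]
        refine sum_congr rfl fun i _ => ?_
        split_ifs <;> simp [Nat.cast_sub hF]
    _ = ∑ v ∈ univ.filter (fun v => v ∉ W),
          ∑ i ∈ univ.filter (fun i => τ i ≠ 0 ∧ τ i ∈ Submodule.span F {v}), ω i := by
        refine sum_comm' fun i v => ?_
        simp only [mem_filter, mem_univ, true_and]
        tauto
    _ = ((Fintype.card V : ℝ) - Fintype.card W) * σ := by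
        have hline : ∀ v ∈ univ.filter (fun v => v ∉ W),
            ∑ i ∈ univ.filter (fun i => τ i ≠ 0 ∧ τ i ∈ Submodule.span F {v}), ω i = σ :=
          fun v hv => h v fun h0 => (mem_filter.mp hv).2 (h0 ▸ W.zero_mem)
        rw [sum_congr rfl hline, sum_const, hcard, nsmul_eq_mul,
          Nat.cast_sub (Fintype.card_subtype_le _)]

end Lines

section DotOrthogonal

variable {F m : Type*} [Field F] [Fintype m]

noncomputable def dotOrthogonal (E : Submodule F (m → F)) : Submodule F (m → F) :=
  (E.map (dotProductEquiv F m).toLinearMap).dualCoannihilator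

theorem mem_dotOrthogonal {E : Submodule F (m → F)} {x : m → F} :
    x ∈ dotOrthogonal E ↔ ∀ γ ∈ E, γ ⬝ᵥ x = 0 := by
  simp only [dotOrthogonal, Submodule.mem_dualCoannihilator, Submodule.mem_map,
    forall_exists_index, and_imp, forall_apply_eq_imp_iff₂]
  rfl

theorem finrank_dotOrthogonal (E : Submodule F (m → F)) :
    Module.finrank F (dotOrthogonal E) = Fintype.card m - Module.finrank F E := by
  have := Subspace.finrank_add_finrank_dualCoannihilator_eq
    (E.map (dotProductEquiv F m).toLinearMap)
  rw [LinearEquiv.finrank_map_eq, Module.finrank_fintype_fun_eq_card] at this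
  rw [dotOrthogonal]
  omega

theorem dotOrthogonal_top : dotOrthogonal (⊤ : Submodule F (m → F)) = ⊥ := by
  rw [← Submodule.finrank_eq_zero, finrank_dotOrthogonal, finrank_top,
    Module.finrank_fintype_fun_eq_card, Nat.sub_self]

theorem exists_mem_map_vecMulLinear_ne_zero_iff {Ω : Type*} [Fintype Ω] (G : Matrix m Ω F)
    (E : Submodule F (m → F)) (i : Ω) :
    (∃ β ∈ E.map G.vecMulLinear, β i ≠ 0) ↔ (fun r => G r i) ∉ dotOrthogonal E := by
  simp only [Submodule.mem_map, mem_dotOrthogonal, not_forall, exists_prop,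
    exists_exists_and_eq_and]
  rfl

theorem WWt_map_vecMulLinear {Ω : Type*} [Fintype Ω] (ω : Ω → ℝ) (G : Matrix m Ω F)
    (E : Submodule F (m → F)) :
    WWt ω (E.map G.vecMulLinear : Set (Ω → F)) =
      ∑ i ∈ univ.filter (fun i => (fun r => G r i) ∉ dotOrthogonal E), ω i := by
  simp only [WWt, SetLike.mem_coe, exists_mem_map_vecMulLinear_ne_zero_iff]

end DotOrthogonal

theorem stmt13_general {F Ω : Type*} [Field F] [Fintype F] [Fintype Ω]
    (q : ℕ) (hq : Fintype.card F = q)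
    (ω : Ω → ℝ)
    (k : ℕ) (G : Matrix (Fin k) Ω F)
    (C : Submodule F (Ω → F)) (hdim : Module.finrank F C = k)
    (hG : (C : Set (Ω → F)) = Set.range (fun γ : Fin k → F => Matrix.vecMul γ G))
    (σ : ℝ)
    (h : ∀ I : Submodule F (Fin k → F), Module.finrank F I = 1 →
      (∑ i ∈ univ.filter
          (fun i => (∃ β ∈ C, β i ≠ 0) ∧ (fun r => G r i) ∈ I), ω i) = σ)
    (D : Submodule F (Ω → F)) (hD : D ≤ C) (s : ℕ) (hs : Module.finrank F D = s) :
    WWt ω (D : Set (Ω → F)) = ((q : ℝ) ^ k - (q : ℝ) ^ (k - s)) * σ / ((q : ℝ) - 1) := by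
  set L := G.vecMulLinear
  have hC : C = L.range := SetLike.coe_injective (hG.trans (LinearMap.coe_range L).symm)
  have hL : Function.Injective L := by
    have := L.finrank_range_add_finrank_ker
    rw [← hC, hdim, Module.finrank_fin_fun] at this
    exact LinearMap.ker_eq_bot.mp (Submodule.finrank_eq_zero.mp (by omega))
  set E := D.comap L
  have hDE : E.map L = D := Submodule.map_comap_eq_self (hC ▸ hD)
  have hE : Module.finrank F E = s :=
    (Submodule.equivMapOfInjective L hL E).finrank_eq.trans (hDE ▸ hs)
  have hsupp : ∀ i, (∃ β ∈ C, β i ≠ 0) ↔ (fun r => G r i) ≠ 0 := fun i => by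
    rw [hC, ← Submodule.map_top, exists_mem_map_vecMulLinear_ne_zero_iff, dotOrthogonal_top,
      Submodule.mem_bot]
  have hcount := card_sub_one_mul_sum_notMem_eq (dotOrthogonal E) (fun i r => G r i) ω σ
    fun v hv => by
      convert h _ (finrank_span_singleton hv) using 4 with i
      exact (hsupp i).symm
  rw [Module.card_eq_pow_finrank (K := F) (V := Fin k → F),
    Module.card_eq_pow_finrank (K := F) (V := dotOrthogonal E), finrank_dotOrthogonal,
    Module.finrank_fin_fun, Fintype.card_fin, hE, hq] at hcount
  have hq1 : (q : ℝ) - 1 ≠ 0 := by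
    have : 1 < q := hq ▸ Fintype.one_lt_card
    rw [sub_ne_zero]; exact_mod_cast this.ne'
  rw [eq_div_iff hq1, ← hDE, WWt_map_vecMulLinear, mul_comm, hcount]
  push_cast
  ring

theorem stmt13 {F Ω : Type*} [Field F] [Fintype F] [Fintype Ω] [Nonempty Ω]
    (q : ℕ) (hq : Fintype.card F = q)
    (ω : Ω → ℝ) (hω : ∀ i, 0 < ω i)
    (k : ℕ) (hk1 : 1 ≤ k) (G : Matrix (Fin k) Ω F)
    (C : Submodule F (Ω → F)) (hdim : Module.finrank F C = k)
    (hG : (C : Set (Ω → F)) = Set.range (fun γ : Fin k → F => Matrix.vecMul γ G))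
    (σ : ℝ)
    (h : ∀ I : Submodule F (Fin k → F), Module.finrank F I = 1 →
      (∑ i ∈ univ.filter
          (fun i => (∃ β ∈ C, β i ≠ 0) ∧ (fun r => G r i) ∈ I), ω i) = σ)
    (D : Submodule F (Ω → F)) (hD : D ≤ C) (s : ℕ) (hs : Module.finrank F D = s) :
    WWt ω (D : Set (Ω → F)) = ((q : ℝ) ^ k - (q : ℝ) ^ (k - s)) * σ / ((q : ℝ) - 1) :=
  stmt13_general q hq ω k G C hdim hG σ h D hD s hs
end
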